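/- Let φ be an LTL formula in negation normal form, w an infinite word over 2^Ap, and X a set of formulas. If w ⊨ φ[X]_ν, then w_i ⊨ (af(φ, w_{0i}))[X]_ν for all i ≥ 0. -/

import Mathlib

/-- LTL formulas in negation normal form over atomic propositions `Ap`. -/
inductive LTL (Ap : Type) : Type
  | tt : LTL Ap
  | ff : LTL Ap
  | atom (a : Ap) : LTL Ap
  | natom (a : Ap) : LTL Ap
  | conj (φ ψ : LTL Ap) : LTL Ap
  | disj (φ ψ : LTL Ap) : LTL Ap
  | next (φ : LTL Ap) : LTL Ap
  | fut (φ : LTL Ap) : LTL Ap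
  | glob (φ : LTL Ap) : LTL Ap
  | untl (φ ψ : LTL Ap) : LTL Ap
  | wUntl (φ ψ : LTL Ap) : LTL Ap
  | strongRel (φ ψ : LTL Ap) : LTL Ap
  | rel (φ ψ : LTL Ap) : LTL Ap

variable {Ap : Type} [DecidableEq Ap]

/-- The suffix `w_i` of an infinite word. -/
def suffix (w : ℕ → Finset Ap) (i : ℕ) : ℕ → Finset Ap := fun k => w (i + k)

/-- Standard LTL satisfaction over infinite words over `2^Ap`. -/
def Sat : (ℕ → Finset Ap) → LTL Ap → Prop
  | _, .tt => True
  | _, .ff => False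
  | w, .atom a => a ∈ w 0
  | w, .natom a => a ∉ w 0
  | w, .conj φ ψ => Sat w φ ∧ Sat w ψ
  | w, .disj φ ψ => Sat w φ ∨ Sat w ψ
  | w, .next φ => Sat (suffix w 1) φ
  | w, .fut φ => ∃ k, Sat (suffix w k) φ
  | w, .glob φ => ∀ k, Sat (suffix w k) φ
  | w, .untl φ ψ => ∃ k, Sat (suffix w k) ψ ∧ ∀ j < k, Sat (suffix w j) φ
  | w, .wUntl φ ψ =>
      (∀ k, Sat (suffix w k) φ) ∨ (∃ k, Sat (suffix w k) ψ ∧ ∀ j < k, Sat (suffix w j) φ)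
  | w, .strongRel φ ψ => ∃ k, Sat (suffix w k) φ ∧ ∀ j ≤ k, Sat (suffix w j) ψ
  | w, .rel φ ψ =>
      (∀ k, Sat (suffix w k) ψ) ∨ (∃ k, Sat (suffix w k) φ ∧ ∀ j ≤ k, Sat (suffix w j) ψ)

/-- The "after" function on a single letter `ν ∈ 2^Ap`. -/
def afLetter : LTL Ap → Finset Ap → LTL Ap
  | .tt, _ => .tt
  | .ff, _ => .ff
  | .atom a, ν => if a ∈ ν then .tt else .ff
  | .natom a, ν => if a ∈ ν then .ff else .tt
  | .conj φ ψ, ν => .conj (afLetter φ ν) (afLetter ψ ν)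
  | .disj φ ψ, ν => .disj (afLetter φ ν) (afLetter ψ ν)
  | .next φ, _ => φ
  | .fut φ, ν => .disj (afLetter φ ν) (.fut φ)
  | .glob φ, ν => .conj (afLetter φ ν) (.glob φ)
  | .untl φ ψ, ν => .disj (afLetter ψ ν) (.conj (afLetter φ ν) (.untl φ ψ))
  | .wUntl φ ψ, ν => .disj (afLetter ψ ν) (.conj (afLetter φ ν) (.wUntl φ ψ))
  | .strongRel φ ψ, ν => .conj (afLetter ψ ν) (.disj (afLetter φ ν) (.strongRel φ ψ))
  | .rel φ ψ, ν => .conj (afLetter ψ ν) (.disj (afLetter φ ν) (.rel φ ψ))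

/-- The "after" function extended to finite words. -/
def af : LTL Ap → List (Finset Ap) → LTL Ap
  | φ, [] => φ
  | φ, ν :: u => af (afLetter φ ν) u

/-- The finite prefix `w_{0i} = w[0]⋯w[i-1]` of an infinite word. -/
def prefixWord (w : ℕ → Finset Ap) (i : ℕ) : List (Finset Ap) :=
  (List.range i).map w

/-- The finite infix `w_{ij} = w[i]⋯w[j-1]` of an infinite word. -/
def infixWord (w : ℕ → Finset Ap) (i j : ℕ) : List (Finset Ap) :=
  (List.range (j - i)).map (fun k => w (i + k))

/-- Evaluation of a formula as a propositional formula, where every maximal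
proper subformula (root not `∧`/`∨`) is treated as a propositional variable
whose truth value is given by the assignment `v`. -/
def propEval (v : LTL Ap → Prop) : LTL Ap → Prop
  | .tt => True
  | .ff => False
  | .conj φ ψ => propEval v φ ∧ propEval v ψ
  | .disj φ ψ => propEval v φ ∨ propEval v ψ
  | φ => v φ

/-- Propositional equivalence `φ ≡_P ψ`. -/
def propEquiv (φ ψ : LTL Ap) : Prop := ∀ v, propEval v φ ↔ propEval v ψ

/-- The set of subformulas of a formula (including itself). -/
def subf : LTL Ap → Set (LTL Ap)
  | .tt => {LTL.tt}
  | .ff => {LTL.ff}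
  | .atom a => {LTL.atom a}
  | .natom a => {LTL.natom a}
  | .conj φ ψ => insert (.conj φ ψ) (subf φ ∪ subf ψ)
  | .disj φ ψ => insert (.disj φ ψ) (subf φ ∪ subf ψ)
  | .next φ => insert (.next φ) (subf φ)
  | .fut φ => insert (.fut φ) (subf φ)
  | .glob φ => insert (.glob φ) (subf φ)
  | .untl φ ψ => insert (.untl φ ψ) (subf φ ∪ subf ψ)
  | .wUntl φ ψ => insert (.wUntl φ ψ) (subf φ ∪ subf ψ)
  | .strongRel φ ψ => insert (.strongRel φ ψ) (subf φ ∪ subf ψ)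
  | .rel φ ψ => insert (.rel φ ψ) (subf φ ∪ subf ψ)

/-- A formula is proper if its root is not a conjunction or a disjunction. -/
def isProper : LTL Ap → Prop
  | .conj _ _ => False
  | .disj _ _ => False
  | _ => True

/-- The set of proper subformulas of `φ`. -/
def properSubf (φ : LTL Ap) : Set (LTL Ap) := {ψ | ψ ∈ subf φ ∧ isProper ψ}

/-- Formulas whose root is a least-fixed-point operator (`F`, `U`, `M`). -/
def isMu : LTL Ap → Prop
  | .fut _ => True
  | .untl _ _ => True
  | .strongRel _ _ => True
  | _ => False

/-- Formulas whose root is a greatest-fixed-point operator (`G`, `W`, `R`). -/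
def isNu : LTL Ap → Prop
  | .glob _ => True
  | .wUntl _ _ => True
  | .rel _ _ => True
  | _ => False

/-- `μ(φ)`: subformulas of `φ` of the form `Fψ`, `ψ₁Uψ₂`, `ψ₁Mψ₂`. -/
def muSet (φ : LTL Ap) : Set (LTL Ap) := {ψ | ψ ∈ subf φ ∧ isMu ψ}

/-- `ν(φ)`: subformulas of `φ` of the form `Gψ`, `ψ₁Wψ₂`, `ψ₁Rψ₂`. -/
def nuSet (φ : LTL Ap) : Set (LTL Ap) := {ψ | ψ ∈ subf φ ∧ isNu ψ}

/-- `GF_w = {ψ ∈ μ(φ) | w ⊨ GFψ}`. -/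
def GFSet (φ : LTL Ap) (w : ℕ → Finset Ap) : Set (LTL Ap) :=
  {ψ | ψ ∈ muSet φ ∧ Sat w (.glob (.fut ψ))}

/-- `F_w = {ψ ∈ μ(φ) | w ⊨ Fψ}`. -/
def FSet (φ : LTL Ap) (w : ℕ → Finset Ap) : Set (LTL Ap) :=
  {ψ | ψ ∈ muSet φ ∧ Sat w (.fut ψ)}

/-- `FG_w = {ψ ∈ ν(φ) | w ⊨ FGψ}`. -/
def FGSet (φ : LTL Ap) (w : ℕ → Finset Ap) : Set (LTL Ap) :=
  {ψ | ψ ∈ nuSet φ ∧ Sat w (.fut (.glob ψ))}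

/-- `G_w = {ψ ∈ ν(φ) | w ⊨ Gψ}`. -/
def GSet (φ : LTL Ap) (w : ℕ → Finset Ap) : Set (LTL Ap) :=
  {ψ | ψ ∈ nuSet φ ∧ Sat w (.glob ψ)}

open scoped Classical in
/-- `φ[X]_ν`. -/
noncomputable def evalNu (X : Set (LTL Ap)) : LTL Ap → LTL Ap
  | .tt => .tt
  | .ff => .ff
  | .atom a => .atom a
  | .natom a => .natom a
  | .conj φ ψ => .conj (evalNu X φ) (evalNu X ψ)
  | .disj φ ψ => .disj (evalNu X φ) (evalNu X ψ)
  | .next φ => .next (evalNu X φ)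
  | .glob φ => .glob (evalNu X φ)
  | .wUntl φ ψ => .wUntl (evalNu X φ) (evalNu X ψ)
  | .rel φ ψ => .rel (evalNu X φ) (evalNu X ψ)
  | .fut φ => if LTL.fut φ ∈ X then .tt else .ff
  | .untl φ ψ => if LTL.untl φ ψ ∈ X then .wUntl (evalNu X φ) (evalNu X ψ) else .ff
  | .strongRel φ ψ => if LTL.strongRel φ ψ ∈ X then .rel (evalNu X φ) (evalNu X ψ) else .ff

open scoped Classical in
/-- `φ[Y]_μ`. -/
noncomputable def evalMu (Y : Set (LTL Ap)) : LTL Ap → LTL Ap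
  | .tt => .tt
  | .ff => .ff
  | .atom a => .atom a
  | .natom a => .natom a
  | .conj φ ψ => .conj (evalMu Y φ) (evalMu Y ψ)
  | .disj φ ψ => .disj (evalMu Y φ) (evalMu Y ψ)
  | .next φ => .next (evalMu Y φ)
  | .fut φ => .fut (evalMu Y φ)
  | .untl φ ψ => .untl (evalMu Y φ) (evalMu Y ψ)
  | .strongRel φ ψ => .strongRel (evalMu Y φ) (evalMu Y ψ)
  | .glob φ => if LTL.glob φ ∈ Y then .tt else .ff
  | .wUntl φ ψ => if LTL.wUntl φ ψ ∈ Y then .tt else .untl (evalMu Y φ) (evalMu Y ψ)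
  | .rel φ ψ => if LTL.rel φ ψ ∈ Y then .tt else .strongRel (evalMu Y φ) (evalMu Y ψ)

/-- Concatenation `u·w` of a finite word and an infinite word. -/
def wordAppend (u : List (Finset Ap)) (w : ℕ → Finset Ap) : ℕ → Finset Ap :=
  fun i => if h : i < u.length then u.get ⟨i, h⟩ else w (i - u.length)

/-- The smallest set of formulas containing `tt`, `ff` and all elements of `S`
that is closed under conjunction and disjunction. -/
inductive PosBool (S : Set (LTL Ap)) : LTL Ap → Prop
  | tt : PosBool S .tt
  | ff : PosBool S .ff
  | base {ψ : LTL Ap} : ψ ∈ S → PosBool S ψ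
  | conj {φ ψ : LTL Ap} : PosBool S φ → PosBool S ψ → PosBool S (.conj φ ψ)
  | disj {φ ψ : LTL Ap} : PosBool S φ → PosBool S ψ → PosBool S (.disj φ ψ)

/-- `Reach(φ)`: the set of `≡_P`-equivalence classes of the formulas `af(φ,u)`
over all finite words `u`. -/
def Reach (φ : LTL Ap) : Set (Set (LTL Ap)) :=
  {C | ∃ u : List (Finset Ap), C = {ψ | propEquiv ψ (af φ u)}}

/-- The fragment `μLTL`: only `tt`, `ff`, literals, `∧`, `∨`, `X`, `F`, `U`, `M`. -/
def inMuLTL : LTL Ap → Prop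
  | .tt => True
  | .ff => True
  | .atom _ => True
  | .natom _ => True
  | .conj φ ψ => inMuLTL φ ∧ inMuLTL ψ
  | .disj φ ψ => inMuLTL φ ∧ inMuLTL ψ
  | .next φ => inMuLTL φ
  | .fut φ => inMuLTL φ
  | .untl φ ψ => inMuLTL φ ∧ inMuLTL ψ
  | .strongRel φ ψ => inMuLTL φ ∧ inMuLTL ψ
  | .glob _ => False
  | .wUntl _ _ => False
  | .rel _ _ => False

/-- The fragment `νLTL`: only `tt`, `ff`, literals, `∧`, `∨`, `X`, `G`, `W`, `R`. -/
def inNuLTL : LTL Ap → Prop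
  | .tt => True
  | .ff => True
  | .atom _ => True
  | .natom _ => True
  | .conj φ ψ => inNuLTL φ ∧ inNuLTL ψ
  | .disj φ ψ => inNuLTL φ ∧ inNuLTL ψ
  | .next φ => inNuLTL φ
  | .glob φ => inNuLTL φ
  | .wUntl φ ψ => inNuLTL φ ∧ inNuLTL ψ
  | .rel φ ψ => inNuLTL φ ∧ inNuLTL ψ
  | .fut _ => False
  | .untl _ _ => False
  | .strongRel _ _ => False

/-
The formula `φ[X]_ν` lies in the fragment built from literals, `∧`, `∨`, `X`, `G`, `W`, `R`,
whose temporal operators are greatest fixed points and satisfy the one-step unfoldings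
`Gφ → φ ∧ XGφ`, `φWψ → ψ ∨ (φ ∧ X(φWψ))`, `φRψ → ψ ∧ (φ ∨ X(φRψ))`. A structural induction
on `φ` therefore shows that `w ⊨ φ[X]_ν` implies `w_1 ⊨ (af(φ, w[0]))[X]_ν`: an `F`, `U` or `M`
in `X` is replaced by `tt`, `W` or `R` on both sides, and one outside `X` makes the hypothesis
`ff`. Iterating this step along the prefix `w_{0i}` gives the theorem.
-/

omit [DecidableEq Ap] in
lemma suffix_zero (w : ℕ → Finset Ap) : suffix w 0 = w := by
  funext k
  simp [suffix]

omit [DecidableEq Ap] in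
lemma suffix_suffix (w : ℕ → Finset Ap) (i j : ℕ) :
    suffix (suffix w i) j = suffix w (i + j) := by
  funext k
  simp [suffix, Nat.add_assoc]

omit [DecidableEq Ap] in
lemma prefixWord_succ (w : ℕ → Finset Ap) (i : ℕ) :
    prefixWord w (i + 1) = prefixWord w i ++ [w i] := by
  simp [prefixWord, List.range_succ]

lemma af_append (φ : LTL Ap) (u v : List (Finset Ap)) : af φ (u ++ v) = af (af φ u) v := by
  induction u generalizing φ with
  | nil => rfl
  | cons ν u ih => exact ih (afLetter φ ν)

omit [DecidableEq Ap] in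
lemma Sat.glob_unfold {w : ℕ → Finset Ap} {φ : LTL Ap} (h : Sat w (.glob φ)) :
    Sat w φ ∧ Sat (suffix w 1) (.glob φ) := by
  refine ⟨suffix_zero w ▸ h 0, fun k => ?_⟩
  rw [suffix_suffix]
  exact h (1 + k)

omit [DecidableEq Ap] in
lemma Sat.wUntl_unfold {w : ℕ → Finset Ap} {φ ψ : LTL Ap} (h : Sat w (.wUntl φ ψ)) :
    Sat w ψ ∨ (Sat w φ ∧ Sat (suffix w 1) (.wUntl φ ψ)) := by
  rcases h with hφ | ⟨_ | k, hψ, hφ⟩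
  · exact Or.inr ⟨suffix_zero w ▸ hφ 0, Or.inl fun k => suffix_suffix w 1 k ▸ hφ (1 + k)⟩
  · exact Or.inl (suffix_zero w ▸ hψ)
  · refine Or.inr ⟨suffix_zero w ▸ hφ 0 k.succ_pos, Or.inr ⟨k, ?_, fun j hj => ?_⟩⟩
    · rw [suffix_suffix, Nat.add_comm]
      exact hψ
    · rw [suffix_suffix]
      exact hφ (1 + j) (by omega)

omit [DecidableEq Ap] in
lemma Sat.rel_unfold {w : ℕ → Finset Ap} {φ ψ : LTL Ap} (h : Sat w (.rel φ ψ)) :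
    Sat w ψ ∧ (Sat w φ ∨ Sat (suffix w 1) (.rel φ ψ)) := by
  rcases h with hψ | ⟨k, hφ, hψ⟩
  · exact ⟨suffix_zero w ▸ hψ 0, Or.inr (Or.inl fun k => suffix_suffix w 1 k ▸ hψ (1 + k))⟩
  refine ⟨suffix_zero w ▸ hψ 0 k.zero_le, ?_⟩
  rcases k with _ | k
  · exact Or.inl (suffix_zero w ▸ hφ)
  · refine Or.inr (Or.inr ⟨k, ?_, fun j hj => ?_⟩)
    · rw [suffix_suffix, Nat.add_comm]
      exact hφ
    · rw [suffix_suffix]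
      exact hψ (1 + j) (by omega)

lemma sat_evalNu_afLetter (X : Set (LTL Ap)) (φ : LTL Ap) {w : ℕ → Finset Ap}
    (h : Sat w (evalNu X φ)) : Sat (suffix w 1) (evalNu X (afLetter φ (w 0))) := by
  induction φ generalizing w with
  | tt => trivial
  | ff => exact h.elim
  | atom a => simp only [afLetter, if_pos (show a ∈ w 0 from h), evalNu, Sat]
  | natom a => simp only [afLetter, if_neg (show a ∉ w 0 from h), evalNu, Sat]
  | conj φ ψ ihφ ihψ => exact h.imp ihφ ihψ
  | disj φ ψ ihφ ihψ => exact h.imp ihφ ihψ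
  | next φ => exact h
  | fut φ =>
    by_cases hX : LTL.fut φ ∈ X
    · simp only [evalNu, afLetter, hX, if_true, Sat]
      exact Or.inr trivial
    · simp [evalNu, hX, Sat] at h
  | glob φ ih => exact h.glob_unfold.imp_left ih
  | wUntl φ ψ ihφ ihψ => exact h.wUntl_unfold.imp ihψ (And.imp_left ihφ)
  | rel φ ψ ihφ ihψ => exact h.rel_unfold.imp ihψ (Or.imp_left ihφ)
  | untl φ ψ ihφ ihψ =>
    by_cases hX : LTL.untl φ ψ ∈ X
    · simp only [evalNu, afLetter, hX, if_true] at h ⊢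
      exact h.wUntl_unfold.imp ihψ (And.imp_left ihφ)
    · simp [evalNu, hX, Sat] at h
  | strongRel φ ψ ihφ ihψ =>
    by_cases hX : LTL.strongRel φ ψ ∈ X
    · simp only [evalNu, afLetter, hX, if_true] at h ⊢
      exact h.rel_unfold.imp ihψ (Or.imp_left ihφ)
    · simp [evalNu, hX, Sat] at h

theorem stmt19_general {Ap : Type} [DecidableEq Ap]
    (φ : LTL Ap) (w : ℕ → Finset Ap) (X : Set (LTL Ap))
    (h : Sat w (evalNu X φ)) :
    ∀ i : ℕ, Sat (suffix w i) (evalNu X (af φ (prefixWord w i))) := by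
  intro i
  induction i with
  | zero => simpa only [suffix_zero, prefixWord, List.range_zero, List.map_nil, af] using h
  | succ i ih =>
    rw [prefixWord_succ, af_append, ← suffix_suffix]
    exact sat_evalNu_afLetter X _ ih

/-- if `w ⊨ φ[X]_ν` then `w_i ⊨ (af(φ, w_{0i}))[X]_ν` for all `i`. -/
theorem stmt19 {Ap : Type} [DecidableEq Ap] [Fintype Ap]
    (φ : LTL Ap) (w : ℕ → Finset Ap) (X : Set (LTL Ap))
    (h : Sat w (evalNu X φ)) :
    ∀ i : ℕ, Sat (suffix w i) (evalNu X (af φ (prefixWord w i))) :=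
  stmt19_general φ w X h
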